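/- arXiv:1408.3957 — 2 statements merged into one kernel-verified Lean document; each statement's English description precedes it below -/
import Mathlib

section
/- For any quantum state X on M_k(ℂ) (i.e., X positive semidefinite with trace 1), the von Neumann entropy satisfies log k − H(X) ≤ k · Tr((X − I/k)²), where H(X) = −Tr(X log X) and I/k is the maximally mixed state. -/
open scoped ComplexOrder

/-- For any quantum state `X` on `M_k(ℂ)` (positive semidefinite, trace 1), the von
Neumann entropy `H(X) = −∑ λᵢ log λᵢ` satisfies `log k − H(X) ≤ k · Tr((X − I/k)²)`. -/
theorem stmt_0 (k : ℕ) (hk : 0 < k) (X : Matrix (Fin k) (Fin k) ℂ)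
    (hX : X.PosSemidef) (htr : X.trace = 1) :
    Real.log k - (- ∑ i, (hX.1.eigenvalues i) * Real.log (hX.1.eigenvalues i))
      ≤ (k : ℝ) * ((X - (k : ℂ)⁻¹ • 1) ^ 2).trace.re := by
  set lam := hX.1.eigenvalues with hlam
  set U := (Matrix.IsHermitian.eigenvectorUnitary hX.1 : Matrix (Fin k) (Fin k) ℂ)
  set D : Matrix (Fin k) (Fin k) ℂ := Matrix.diagonal (RCLike.ofReal ∘ lam)
  have hspec : X = U * D * star U := hX.1.spectral_theorem
  have hUU : star U * U = 1 := (Matrix.mem_unitaryGroup_iff').mp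
    (Matrix.IsHermitian.eigenvectorUnitary hX.1).2
  have htrD : X.trace = D.trace := by
    rw [hspec, Matrix.trace_mul_cycle, hUU, Matrix.one_mul]
  have htrD2 : (X ^ 2).trace = (D ^ 2).trace := by
    have h2 : X ^ 2 = U * D ^ 2 * star U := by
      rw [hspec, show (U*D*star U)^2 = U*D*(star U*U)*(D*star U) by noncomm_ring, hUU]
      noncomm_ring
    rw [h2, Matrix.trace_mul_cycle, hUU, Matrix.one_mul]
  have hsum : ∑ i, lam i = 1 := by
    have : D.trace = ∑ i, (lam i : ℂ) := by simp [D, Matrix.trace_diagonal]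
    have h1 : (∑ i, (lam i : ℂ)) = 1 := by rw [← this, ← htrD, htr]
    exact_mod_cast h1
  have hsum2 : (X ^ 2).trace.re = ∑ i, (lam i) ^ 2 := by
    rw [htrD2]
    have : D ^ 2 = Matrix.diagonal (fun i => ((lam i : ℂ)) ^ 2) := by
      simp [D, pow_two, Matrix.diagonal_mul_diagonal]
    rw [this, Matrix.trace_diagonal]
    simp [← Complex.ofReal_pow]
  have hk0 : (k:ℝ) ≠ 0 := Nat.cast_ne_zero.mpr hk.ne'
  have hkc : (k:ℂ) ≠ 0 := Nat.cast_ne_zero.mpr hk.ne'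
  have hre : ((X - (k:ℂ)⁻¹ • 1) ^ 2).trace.re = (∑ i, lam i ^ 2) - (k:ℝ)⁻¹ := by
    have hexp : (X - (k:ℂ)⁻¹ • 1) ^ 2
        = X ^ 2 - (2 * (k:ℂ)⁻¹) • X + ((k:ℂ)⁻¹ ^ 2) • 1 := by
      simp only [pow_two, sub_mul, mul_sub, Matrix.mul_smul, Matrix.smul_mul,
        Matrix.mul_one, Matrix.one_mul, smul_smul]
      module
    have htrval : ((X - (k:ℂ)⁻¹ • 1) ^ 2).trace = (X ^ 2).trace - (k:ℂ)⁻¹ := by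
      rw [hexp, Matrix.trace_add, Matrix.trace_sub, Matrix.trace_smul, Matrix.trace_smul,
        htr, Matrix.trace_one]
      simp only [Fintype.card_fin, smul_eq_mul, mul_one]
      field_simp
      ring
    rw [htrval, Complex.sub_re, hsum2]
    norm_num [Complex.inv_re, Complex.normSq_natCast]
  rw [hre]
  have hnn : ∀ i, 0 ≤ lam i := fun i => hX.eigenvalues_nonneg i
  have key : ∀ i ∈ Finset.univ, lam i * Real.log (lam i) + lam i * Real.log k
      ≤ (k:ℝ) * lam i ^ 2 - lam i := by
    intro i _
    rcases eq_or_lt_of_le (hnn i) with h0 | hpos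
    · simp [← h0]
    · have hlog : Real.log (lam i) + Real.log k = Real.log ((k:ℝ) * lam i) := by
        rw [Real.log_mul hk0 hpos.ne', add_comm]
      have hle : Real.log ((k:ℝ) * lam i) ≤ (k:ℝ) * lam i - 1 :=
        Real.log_le_sub_one_of_pos (by positivity)
      nlinarith [mul_le_mul_of_nonneg_left hle (hnn i)]
  calc Real.log k - (- ∑ i, lam i * Real.log (lam i))
      = ∑ i, (lam i * Real.log (lam i) + lam i * Real.log k) := by
        rw [Finset.sum_add_distrib, ← Finset.sum_mul, hsum]; ring
    _ ≤ ∑ i, ((k:ℝ) * lam i ^ 2 - lam i) := Finset.sum_le_sum key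
    _ = (k:ℝ) * ((∑ i, lam i ^ 2) - (k:ℝ)⁻¹) := by
        rw [Finset.sum_sub_distrib, ← Finset.mul_sum, hsum, mul_sub, mul_inv_cancel₀ hk0]
end

section
/- Let Φ: M_d(ℂ) → M_k(ℂ) be given by Φ(X) = (id_k ⊗ Tr_n)(W X W*) for an isometry W: ℂ^d → ℂ^k ⊗ ℂ^n with d = tkn, and let Φ̄(X) = (id ⊗ Tr)(W̄ X Wᵗ). Then for the maximally entangled (Bell) state B on ℂ^d ⊗ ℂ^d, the largest eigenvalue of (Φ ⊗ Φ̄)(B) is at least t = d/(kn). -/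
/-!
Evaluate the quadratic form of `M = (Φ ⊗ Φ̄)(B)` on the unnormalised Bell vector
`u = ∑ᵢ eᵢ ⊗ eᵢ` of `ℂᵏ ⊗ ℂᵏ`. With `S = Tr_k (W W*)` the complementary output of `I_d`, one finds
`⟨u, M u⟩ = d⁻¹ ∑_{e,f} |S_{ef}|² ≥ d⁻¹ ∑_e S_{ee}² ≥ d⁻¹ (Tr S)² / n = d / n`,
by Cauchy–Schwarz and `Tr S = Tr (W W*) = Tr (W* W) = d`. Since `‖u‖² = k`, the Rayleigh
quotient bounds the largest eigenvalue of `M` below by `d / (k n)`.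
-/

open scoped ComplexOrder

/-- Partial trace over the second (environment) tensor factor. -/
noncomputable def ptraceEnv {k n : ℕ}
    (M : Matrix (Fin k × Fin n) (Fin k × Fin n) ℂ) : Matrix (Fin k) (Fin k) ℂ :=
  fun i j => ∑ e : Fin n, M (i, e) (j, e)

/-- The channel `Φ(X) = (id_k ⊗ Tr_n)(W X W*)`. -/
noncomputable def channelPhi {k n d : ℕ} (W : Matrix (Fin k × Fin n) (Fin d) ℂ)
    (X : Matrix (Fin d) (Fin d) ℂ) : Matrix (Fin k) (Fin k) ℂ :=
  ptraceEnv (W * X * W.conjTranspose)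

/-- The output `(Φ ⊗ Φ̄)(X)` of the product channel, `Φ̄` being the complex conjugate
channel: partial trace over both environments of `(W ⊗ W̄) X (W ⊗ W̄)*`. -/
noncomputable def productChannelOut {k n d : ℕ}
    (W : Matrix (Fin k × Fin n) (Fin d) ℂ)
    (X : Matrix (Fin d × Fin d) (Fin d × Fin d) ℂ) :
    Matrix (Fin k × Fin k) (Fin k × Fin k) ℂ :=
  fun p q => ∑ e : Fin n, ∑ f : Fin n,
    (∑ r : Fin d × Fin d, ∑ s : Fin d × Fin d,
      W (p.1, e) r.1 * (starRingEnd ℂ) (W (p.2, f) r.2) * X r s *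
        (starRingEnd ℂ) (W (q.1, e) s.1) * W (q.2, f) s.2)

/-- The Bell (maximally entangled) state on `ℂ^d ⊗ ℂ^d`. -/
noncomputable def bellState (d : ℕ) :
    Matrix (Fin d × Fin d) (Fin d × Fin d) ℂ :=
  fun r s => if r.1 = r.2 ∧ s.1 = s.2 then (d : ℂ)⁻¹ else 0

open Matrix

namespace Matrix.IsHermitian

open scoped MatrixOrder

variable {m 𝕜 : Type*} [Fintype m] [DecidableEq m] [RCLike 𝕜] {M : Matrix m m 𝕜}
  (hM : M.IsHermitian)
include hM

theorem re_dotProduct_mulVec_le_of_eigenvalues_le {c : ℝ} (hc : ∀ i, hM.eigenvalues i ≤ c)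
    (v : m → 𝕜) : RCLike.re (star v ⬝ᵥ M *ᵥ v) ≤ c * RCLike.re (star v ⬝ᵥ v) := by
  have hle : M ≤ algebraMap ℝ (Matrix m m 𝕜) c := by
    refine le_algebraMap_of_spectrum_le (fun x hx => ?_) hM.isSelfAdjoint
    obtain ⟨i, rfl⟩ := hM.spectrum_real_eq_range_eigenvalues ▸ hx
    exact hc i
  simpa [sub_mulVec, dotProduct_sub, Algebra.algebraMap_eq_smul_one, smul_mulVec,
    dotProduct_smul, RCLike.smul_re] using (Matrix.le_iff.mp hle).re_dotProduct_nonneg v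

theorem exists_le_eigenvalues_of_le_re_dotProduct_mulVec [Nonempty m] {t : ℝ} {v : m → 𝕜}
    (hv : 0 < RCLike.re (star v ⬝ᵥ v))
    (ht : t * RCLike.re (star v ⬝ᵥ v) ≤ RCLike.re (star v ⬝ᵥ M *ᵥ v)) :
    ∃ i, t ≤ hM.eigenvalues i := by
  obtain ⟨i, -, hi⟩ := Finset.univ.exists_max_image hM.eigenvalues Finset.univ_nonempty
  refine ⟨i, le_of_mul_le_mul_right (ht.trans ?_) hv⟩
  exact hM.re_dotProduct_mulVec_le_of_eigenvalues_le (fun j => hi j (Finset.mem_univ j)) v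

end Matrix.IsHermitian

def bellVec (ι : Type*) [DecidableEq ι] : ι × ι → ℂ :=
  fun p => if p.1 = p.2 then 1 else 0

section BellVector

variable {ι : Type*} [Fintype ι] [DecidableEq ι]

theorem star_bellVec_dotProduct_bellVec :
    star (bellVec ι) ⬝ᵥ bellVec ι = Fintype.card ι := by
  simp [bellVec, dotProduct, Fintype.sum_prod_type, apply_ite star]

theorem star_bellVec_dotProduct_mulVec_bellVec (M : Matrix (ι × ι) (ι × ι) ℂ) :
    star (bellVec ι) ⬝ᵥ M *ᵥ bellVec ι = ∑ i, ∑ j, M (i, i) (j, j) := by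
  simp [bellVec, dotProduct, mulVec, Fintype.sum_prod_type, apply_ite star]

end BellVector

def ptraceSys {ι κ R : Type*} [Fintype ι] [AddCommMonoid R]
    (M : Matrix (ι × κ) (ι × κ) R) : Matrix κ κ R :=
  fun e f => ∑ i, M (i, e) (i, f)

theorem trace_ptraceSys {ι κ R : Type*} [Fintype ι] [Fintype κ] [AddCommMonoid R]
    (M : Matrix (ι × κ) (ι × κ) R) : (ptraceSys M).trace = M.trace := by
  simp only [trace, diag, ptraceSys, Fintype.sum_prod_type]
  exact Finset.sum_comm

theorem productChannelOut_bellState_apply {k n d : ℕ} (W : Matrix (Fin k × Fin n) (Fin d) ℂ)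
    (p q : Fin k × Fin k) :
    productChannelOut W (bellState d) p q = (d : ℂ)⁻¹ * ∑ e, ∑ f,
      (W * Wᴴ) (p.1, e) (p.2, f) * star ((W * Wᴴ) (q.1, e) (q.2, f)) := by
  simp only [productChannelOut, bellState, ite_and, mul_ite, ite_mul, mul_zero, zero_mul,
    Finset.sum_ite_irrel, Finset.sum_const_zero, Fintype.sum_prod_type, Finset.sum_ite_eq,
    Finset.mem_univ, if_true]
  simp only [mul_apply, conjTranspose_apply, Complex.star_def, map_sum, map_mul, Complex.conj_conj]
  simp_rw [Finset.sum_mul_sum, Finset.mul_sum]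
  refine Finset.sum_congr rfl fun e _ => Finset.sum_congr rfl fun f _ =>
    Finset.sum_congr rfl fun a _ => Finset.sum_congr rfl fun b _ => by ring

theorem sum_productChannelOut_bellState_diag {k n d : ℕ} (W : Matrix (Fin k × Fin n) (Fin d) ℂ) :
    ∑ i, ∑ j, productChannelOut W (bellState d) (i, i) (j, j) =
      (d : ℂ)⁻¹ * ∑ e, ∑ f, (Complex.normSq (ptraceSys (W * Wᴴ) e f) : ℂ) := by
  simp only [productChannelOut_bellState_apply, ← Finset.mul_sum]
  simp_rw [← Complex.mul_conj, ptraceSys, map_sum, Complex.star_def, Finset.sum_mul_sum,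
    Finset.sum_comm (γ := Fin k) (α := Fin n)]

theorem sq_re_trace_div_card_le_sum_normSq {κ : Type*} [Fintype κ] (S : Matrix κ κ ℂ) :
    S.trace.re ^ 2 / Fintype.card κ ≤ ∑ e, ∑ f, Complex.normSq (S e f) := by
  refine div_le_of_le_mul₀ (Nat.cast_nonneg _)
    (Finset.sum_nonneg fun e _ => Finset.sum_nonneg fun f _ => Complex.normSq_nonneg _) ?_
  calc S.trace.re ^ 2 = (∑ e, (S e e).re) ^ 2 := by simp [trace]
    _ ≤ Fintype.card κ * ∑ e, (S e e).re ^ 2 := sq_sum_le_card_mul_sum_sq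
    _ ≤ Fintype.card κ * ∑ e, ∑ f, Complex.normSq (S e f) := by
      gcongr with e
      exact (sq (S e e).re ▸ Complex.re_sq_le_normSq _).trans
        (Finset.single_le_sum (fun f _ => Complex.normSq_nonneg (S e f)) (Finset.mem_univ e))
    _ = _ := mul_comm _ _

theorem stmt_12_general (k n d : ℕ) (hk : 0 < k)
    (W : Matrix (Fin k × Fin n) (Fin d) ℂ)
    (hW : W.conjTranspose * W = 1)
    (hM : (productChannelOut W (bellState d)).IsHermitian) :
    ∃ i, (d : ℝ) / (k * n) ≤ hM.eigenvalues i := by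
  have := Fin.pos_iff_nonempty.mp hk
  have hk' : (k : ℝ) ≠ 0 := by positivity
  have hnorm : RCLike.re (star (bellVec (Fin k)) ⬝ᵥ bellVec (Fin k)) = k := by
    simp [star_bellVec_dotProduct_bellVec]
  have htrace : (ptraceSys (W * Wᴴ)).trace.re = d := by
    simp [trace_ptraceSys, trace_mul_comm W, hW]
  have hCS := sq_re_trace_div_card_le_sum_normSq (ptraceSys (W * Wᴴ))
  rw [htrace, Fintype.card_fin] at hCS
  refine hM.exists_le_eigenvalues_of_le_re_dotProduct_mulVec (v := bellVec (Fin k))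
    (by rw [hnorm]; positivity) ?_
  rw [hnorm, star_bellVec_dotProduct_mulVec_bellVec, sum_productChannelOut_bellState_diag]
  calc (d : ℝ) / (k * n) * k = (d : ℝ)⁻¹ * (d ^ 2 / n) := by
        rw [mul_comm (k : ℝ), ← div_div, div_mul_cancel₀ _ hk', sq, ← mul_div_assoc, ← mul_assoc,
          inv_mul_mul_self]
    _ ≤ (d : ℝ)⁻¹ * ∑ e, ∑ f, Complex.normSq (ptraceSys (W * Wᴴ) e f) := by gcongr
    _ = _ := by simp

/-- Hayden–Winter lemma: for `Φ` from an isometry `W : ℂ^d → ℂ^k ⊗ ℂ^n` and `Φ̄` its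
conjugate channel, the largest eigenvalue of `(Φ ⊗ Φ̄)(B)` is at least `t = d/(kn)`,
`B` the Bell state. -/
theorem stmt_12 (k n d : ℕ) (hk : 0 < k) (hn : 0 < n) (hd : 0 < d)
    (W : Matrix (Fin k × Fin n) (Fin d) ℂ)
    (hW : W.conjTranspose * W = 1)
    (hM : (productChannelOut W (bellState d)).IsHermitian) :
    ∃ i, (d : ℝ) / (k * n) ≤ hM.eigenvalues i :=
  stmt_12_general k n d hk W hW hM
end
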